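/- For every η > 0, lim_{N→∞, N∈ℕ} f_N(η) = g(η); equivalently, if X̂^{(N)} denotes an optimal N-point reconstruction of a uniform random vector X on [0,1)^d (i.e., a minimizer of E[φ((N/η)^{1/d} ‖X − X̂‖)] over all random vectors X̂ whose range has at most N elements), then lim_{N→∞} E[φ((N/η)^{1/d} ‖X − X̂^{(N)}‖)] = g(η). -/

import Mathlib

open MeasureTheory Filter Set
open scoped ENNReal NNReal

noncomputable section

abbrev Rd (d : ℕ) := Fin d → ℝ

/-- `nrm` is a norm on `ℝ^d`. -/
def IsNorm {d : ℕ} (nrm : Rd d → ℝ) : Prop :=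
  (∀ x, 0 ≤ nrm x) ∧ (∀ x, nrm x = 0 ↔ x = 0) ∧
  (∀ (c : ℝ) (x : Rd d), nrm (c • x) = |c| * nrm x) ∧
  (∀ x y, nrm (x + y) ≤ nrm x + nrm y)

/-- The standing assumptions on `φ`: increasing, nonnegative, left continuous,
`lim_{t↓0} φ(t) = 0`, and not identically zero on `[0,∞)`. -/
def PhiOK (φ : ℝ → ℝ) : Prop :=
  MonotoneOn φ (Ici 0) ∧ (∀ t, 0 ≤ t → 0 ≤ φ t) ∧
  (∀ t, 0 < t → Tendsto φ (nhdsWithin t (Iio t)) (nhds (φ t))) ∧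
  Tendsto φ (nhdsWithin 0 (Ioi 0)) (nhds 0) ∧
  (∃ t, 0 ≤ t ∧ φ t ≠ 0)

/-- distance from a point to a set, `d(x,A) = inf_{y ∈ A} ‖x - y‖`. -/
def dSet {d : ℕ} (nrm : Rd d → ℝ) (x : Rd d) (A : Set (Rd d)) : ℝ :=
  sInf ((fun y => nrm (x - y)) '' A)

/-- the unit cube `[0,1)^d`. -/
def unitCube (d : ℕ) : Set (Rd d) := univ.pi fun _ => Ico (0:ℝ) 1

/-- `f_N(η) = inf_C E[φ((N/η)^{1/d} d(U,C))]`, infimum over nonempty codebooks of at most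
`⌊N⌋` points, `U` uniform on `[0,1)^d`; it is `∞` for `N < 1` (empty infimum). -/
def fNq {d : ℕ} (nrm : Rd d → ℝ) (φ : ℝ → ℝ) (N η : ℝ) : ℝ≥0∞ :=
  ⨅ (C : Finset (Rd d)) (_ : C.Nonempty) (_ : (C.card : ℝ) ≤ N),
    ∫⁻ x in unitCube d, ENNReal.ofReal (φ ((N / η) ^ (1 / (d:ℝ)) * dSet nrm x (C : Set (Rd d)))) ∂volume

/-- `g(η) = inf_{N ≥ 1} f_N(η)` for `η > 0`, extended by `g(0) = lim_{η↓0} g(η) = sup_{η>0} g(η)`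
for `η ≤ 0`. -/
def gq {d : ℕ} (nrm : Rd d → ℝ) (φ : ℝ → ℝ) (η : ℝ) : ℝ≥0∞ :=
  if 0 < η then ⨅ N ∈ Ici (1:ℝ), fNq nrm φ N η
  else ⨆ η' ∈ Ioi (0:ℝ), ⨅ N ∈ Ici (1:ℝ), fNq nrm φ N η'

/-- the absolutely continuous part `μ_c` of `μ` with respect to Lebesgue measure. -/
def muc {d : ℕ} (μ : Measure (Rd d)) : Measure (Rd d) :=
  volume.withDensity (μ.rnDeriv volume)

/-- Orlicz norm `‖F(X)‖_φ = inf{t > 0 : E[φ(F(X)/t)] ≤ 1}` (as the `sInf` in `ℝ≥0∞`,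
so it is `∞` when no such `t` exists), where `X` has law `μ`. -/
def orliczN {d : ℕ} (φ : ℝ → ℝ) (μ : Measure (Rd d)) (F : Rd d → ℝ) : ℝ≥0∞ :=
  sInf {s : ℝ≥0∞ | ∃ t : ℝ, 0 < t ∧ s = ENNReal.ofReal t ∧
    ∫⁻ x, ENNReal.ofReal (φ (F x / t)) ∂μ ≤ 1}

/-- the quantization error `δ(N|X,φ)`, where `X` has law `μ`. -/
def quantErr {d : ℕ} (nrm : Rd d → ℝ) (φ : ℝ → ℝ) (μ : Measure (Rd d)) (N : ℝ) : ℝ≥0∞ :=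
  ⨅ (C : Finset (Rd d)) (_ : C.Nonempty) (_ : (C.card : ℝ) ≤ N),
    orliczN φ μ (fun x => dSet nrm x (C : Set (Rd d)))

/-- `I`, the value of the point allocation problem. -/
def pav {d : ℕ} (nrm : Rd d → ℝ) (φ : ℝ → ℝ) (μ : Measure (Rd d)) : ℝ≥0∞ :=
  ⨅ (ξ : Rd d → ℝ) (_ : ∀ x, 0 ≤ ξ x) (_ : Integrable ξ volume)
    (_ : ∫⁻ x, gq nrm φ (ξ x) ∂(muc μ) ≤ 1),
    ENNReal.ofReal (∫ x, ξ x)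

/-- `ḡ(a) = inf_{η>0} [g(η) + aη]`. -/
def gbarq {d : ℕ} (nrm : Rd d → ℝ) (φ : ℝ → ℝ) (a : ℝ≥0∞) : ℝ≥0∞ :=
  ⨅ η ∈ Ioi (0:ℝ), (gq nrm φ η + a * ENNReal.ofReal η)

/-!
`f_N(η) ≥ g(η)` for every `N ≥ 1`. Conversely, let `C` be a codebook of at most `M` points whose
error at scale `λ = (M/η)^{1/d}` is below `a`. For `k = ⌊(N/M)^{1/d}⌋`, tiling the unit cube by
`k^d` copies of `C` shrunk by the factor `k` gives a codebook of at most `N` points whose error at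
scale `(N/η)^{1/d}` is at most that of `C` at scale `(N/η)^{1/d} / k`, and this scale decreases
to `λ`. The error of `C` is right-continuous in the scale, because the monotone `φ` has only
countably many jumps and the level sets of a norm are Lebesgue-null; so it stays below `a` for
large `N`.
-/

open Topology

namespace IsNorm

variable {d : ℕ} {nrm : Rd d → ℝ}

def toSeminorm (h : IsNorm nrm) : Seminorm ℝ (Rd d) :=
  Seminorm.of nrm h.2.2.2 h.2.2.1

theorem coe_toSeminorm (h : IsNorm nrm) : ⇑h.toSeminorm = nrm := rfl

protected theorem continuous (h : IsNorm nrm) : Continuous nrm :=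
  h.toSeminorm.convexOn.locallyLipschitz.continuous

theorem volume_sphere_eq_zero (h : IsNorm nrm) (y : Rd d) {s : ℝ} (hs : 0 < s) :
    volume {x | nrm (x - y) = s} = 0 := by
  refine measure_mono_null (fun x hx => ?_)
    ((h.toSeminorm.convex_closedBall y s).addHaar_frontier volume)
  have hx : nrm (x - y) = s := hx
  have hclosed : x ∈ h.toSeminorm.closedBall y s := hx.le
  rw [frontier_eq_closure_inter_closure]
  refine ⟨subset_closure hclosed, mem_closure_of_tendsto (f := fun t : ℝ => x + t • (x - y))
    (b := 𝓝[>] 0) ?_ ?_⟩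
  · refine tendsto_nhdsWithin_of_tendsto_nhds ?_
    simpa using ((continuous_id.smul continuous_const).const_add x).tendsto (0 : ℝ)
  · filter_upwards [self_mem_nhdsWithin] with t (ht : 0 < t)
    have : x + t • (x - y) - y = (1 + t) • (x - y) := by module
    simp only [mem_compl_iff, Seminorm.mem_closedBall, coe_toSeminorm, this, h.2.2.1, hx,
      abs_of_pos (by positivity : (0:ℝ) < 1 + t), not_le]
    nlinarith

theorem volume_levelSet_eq_zero (hd : 0 < d) (h : IsNorm nrm) (y : Rd d) (s : ℝ) :
    volume {x | nrm (x - y) = s} = 0 := by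
  rcases lt_trichotomy s 0 with hs | rfl | hs
  · convert measure_empty (μ := (volume : Measure (Rd d)))
    exact eq_empty_of_forall_notMem fun x hx => (h.1 _).not_gt ((show nrm (x - y) = s from hx) ▸ hs)
  · have : Nonempty (Fin d) := ⟨⟨0, hd⟩⟩
    convert measure_singleton (μ := (volume : Measure (Rd d))) y
    ext x
    simp [h.2.1 (x - y), sub_eq_zero]
  · exact h.volume_sphere_eq_zero y hs

end IsNorm

section Codebook

variable {d : ℕ} {nrm : Rd d → ℝ} {φ : ℝ → ℝ} {C : Finset (Rd d)}

theorem dSet_eq_inf' (hC : C.Nonempty) (x : Rd d) :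
    dSet nrm x ↑C = C.inf' hC fun y => nrm (x - y) := by
  rw [Finset.inf'_eq_csInf_image]
  rfl

theorem dSet_nonneg (h : IsNorm nrm) (hC : C.Nonempty) (x : Rd d) : 0 ≤ dSet nrm x ↑C := by
  rw [dSet_eq_inf' hC]
  exact Finset.le_inf' hC _ fun y _ => h.1 _

theorem dSet_le (hC : C.Nonempty) {y : Rd d} (hy : y ∈ C) (x : Rd d) :
    dSet nrm x ↑C ≤ nrm (x - y) := by
  rw [dSet_eq_inf' hC]
  exact Finset.inf'_le _ hy

theorem exists_mem_dSet_eq (hC : C.Nonempty) (x : Rd d) :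
    ∃ y ∈ C, dSet nrm x ↑C = nrm (x - y) := by
  obtain ⟨y, hy, hxy⟩ := Finset.exists_mem_eq_inf' hC fun y => nrm (x - y)
  exact ⟨y, hy, by rw [dSet_eq_inf' hC, hxy]⟩

theorem continuous_dSet (h : IsNorm nrm) (hC : C.Nonempty) :
    Continuous fun x => dSet nrm x ↑C := by
  simp_rw [dSet_eq_inf' hC]
  exact continuous_iff_continuousAt.2 fun x => ContinuousAt.finset_inf'_apply hC fun y _ =>
    (h.continuous.comp (continuous_id.sub continuous_const)).continuousAt

theorem monotone_comp_max_zero (hφ : MonotoneOn φ (Ici 0)) : Monotone fun t => φ (max t 0) :=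
  fun a b hab => hφ (le_max_right a 0) (le_max_right b 0) (max_le_max hab le_rfl)

def codebookError (nrm : Rd d → ℝ) (φ : ℝ → ℝ) (C : Finset (Rd d)) (s : ℝ) : ℝ≥0∞ :=
  ∫⁻ x in unitCube d, ENNReal.ofReal (φ (s * dSet nrm x ↑C))

theorem fNq_eq_iInf_codebookError (N η : ℝ) :
    fNq nrm φ N η = ⨅ (C : Finset (Rd d)) (_ : C.Nonempty) (_ : (C.card : ℝ) ≤ N),
      codebookError nrm φ C ((N / η) ^ (1 / (d : ℝ))) := rfl

theorem measurable_ofReal_comp_mul_dSet (h : IsNorm nrm) (hφ : MonotoneOn φ (Ici 0))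
    (hC : C.Nonempty) {s : ℝ} (hs : 0 ≤ s) :
    Measurable fun x => ENNReal.ofReal (φ (s * dSet nrm x ↑C)) := by
  have hmax : ∀ x, φ (s * dSet nrm x ↑C) = φ (max (s * dSet nrm x ↑C) 0) := fun x => by
    rw [max_eq_left (mul_nonneg hs (dSet_nonneg h hC x))]
  simp_rw [hmax]
  exact ENNReal.measurable_ofReal.comp ((monotone_comp_max_zero hφ).measurable.comp
    ((continuous_dSet h hC).measurable.const_mul s))

theorem codebookError_mono (h : IsNorm nrm) (hφ : MonotoneOn φ (Ici 0)) (hC : C.Nonempty)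
    {s t : ℝ} (hs : 0 ≤ s) (hst : s ≤ t) : codebookError nrm φ C s ≤ codebookError nrm φ C t :=
  lintegral_mono fun x => ENNReal.ofReal_le_ofReal <|
    hφ (mul_nonneg hs (dSet_nonneg h hC x)) (mul_nonneg (hs.trans hst) (dSet_nonneg h hC x))
      (mul_le_mul_of_nonneg_right hst (dSet_nonneg h hC x))

theorem measurableSet_unitCube : MeasurableSet (unitCube d) :=
  MeasurableSet.univ_pi fun _ => measurableSet_Ico

theorem unitCube_subset_Icc : unitCube d ⊆ Icc 0 1 :=
  fun _ hx => ⟨fun i => (hx i trivial).1, fun i => (hx i trivial).2.le⟩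

theorem codebookError_ne_top (h : IsNorm nrm) (hφ : MonotoneOn φ (Ici 0)) (hC : C.Nonempty)
    {s : ℝ} (hs : 0 ≤ s) : codebookError nrm φ C s ≠ ∞ := by
  obtain ⟨R, hR⟩ := (isCompact_Icc.bddAbove_image (continuous_dSet h hC).continuousOn :
    BddAbove ((fun x => dSet nrm x ↑C) '' Icc (0 : Rd d) 1))
  have hbound : ∀ x ∈ unitCube d,
      ENNReal.ofReal (φ (s * dSet nrm x ↑C)) ≤ ENNReal.ofReal (φ (s * R)) := fun x hx =>
    have hxR : dSet nrm x ↑C ≤ R := hR ⟨x, unitCube_subset_Icc hx, rfl⟩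
    ENNReal.ofReal_le_ofReal <| hφ (mul_nonneg hs (dSet_nonneg h hC x))
      (mul_nonneg hs ((dSet_nonneg h hC x).trans hxR)) (mul_le_mul_of_nonneg_left hxR hs)
  refine ne_top_of_le_ne_top ?_ (setLIntegral_mono' measurableSet_unitCube hbound)
  rw [setLIntegral_const]
  exact ENNReal.mul_ne_top ENNReal.ofReal_ne_top
    (measure_mono (μ := volume) unitCube_subset_Icc |>.trans_lt isCompact_Icc.measure_lt_top).ne

end Codebook

section RightContinuity

variable {d : ℕ} {nrm : Rd d → ℝ} {φ : ℝ → ℝ} {C : Finset (Rd d)}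

theorem ae_mul_dSet_notMem (hd : 0 < d) (h : IsNorm nrm) (hC : C.Nonempty) {s : ℝ} (hs : 0 < s)
    {D : Set ℝ} (hD : D.Countable) : ∀ᵐ x, s * dSet nrm x ↑C ∉ D := by
  refine measure_eq_zero_iff_ae_notMem.1 (measure_mono_null (t := ⋃ t ∈ D, ⋃ y ∈ (C : Set (Rd d)),
    {x | nrm (x - y) = t / s}) (fun x hx => ?_) ((measure_biUnion_null_iff hD).2 fun t _ =>
      (measure_biUnion_null_iff C.countable_toSet).2 fun y _ => h.volume_levelSet_eq_zero hd y _))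
  obtain ⟨y, hy, hxy⟩ := exists_mem_dSet_eq (nrm := nrm) hC x
  refine mem_biUnion (x := s * dSet nrm x ↑C) hx (mem_biUnion hy ?_)
  simp only [mem_ofPred_eq, ← hxy]
  field_simp

theorem tendsto_codebookError_nhdsGT (hd : 0 < d) (h : IsNorm nrm) (hφ : MonotoneOn φ (Ici 0))
    (hC : C.Nonempty) {s : ℝ} (hs : 0 < s) :
    Tendsto (codebookError nrm φ C) (𝓝[>] s) (𝓝 (codebookError nrm φ C s)) := by
  -- a monotone extension of `φ` to `ℝ`, so that its points of discontinuity are countable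
  set ψ : ℝ → ℝ := fun t => φ (max t 0)
  have hψφ : ∀ t : ℝ, 0 ≤ t → ∀ x, ψ (t * dSet nrm x ↑C) = φ (t * dSet nrm x ↑C) :=
    fun t ht x => congrArg φ (max_eq_left (mul_nonneg ht (dSet_nonneg h hC x)))
  have hpos : ∀ᶠ t in 𝓝[>] s, 0 < t := eventually_nhdsWithin_of_forall fun t ht => hs.trans ht
  refine tendsto_lintegral_filter_of_dominated_convergence
    (fun x => ENNReal.ofReal (φ ((s + 1) * dSet nrm x ↑C)))
    (hpos.mono fun t ht => measurable_ofReal_comp_mul_dSet h hφ hC ht.le) ?_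
    (codebookError_ne_top h hφ hC (by positivity)) ?_
  · filter_upwards [hpos, Ioo_mem_nhdsGT (lt_add_one s)] with t ht ht1
    exact Eventually.of_forall fun x => ENNReal.ofReal_le_ofReal <|
      hφ (mul_nonneg ht.le (dSet_nonneg h hC x)) (mul_nonneg (by positivity) (dSet_nonneg h hC x))
        (mul_le_mul_of_nonneg_right ht1.2.le (dSet_nonneg h hC x))
  · filter_upwards [ae_restrict_of_ae (ae_mul_dSet_notMem hd h hC hs
      (monotone_comp_max_zero hφ).countable_not_continuousAt)] with x hx
    have hψ : Tendsto (fun t => ψ (t * dSet nrm x ↑C)) (𝓝[>] s) (𝓝 (ψ (s * dSet nrm x ↑C))) :=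
      (not_not.1 hx).tendsto.comp
        ((continuous_id.mul continuous_const).tendsto s |>.mono_left nhdsWithin_le_nhds)
    rw [← hψφ s hs.le]
    exact (ENNReal.continuous_ofReal.tendsto _).comp
      (hψ.congr' (hpos.mono fun t ht => hψφ t ht.le x))

end RightContinuity

section Cells

variable {d k : ℕ}

/-- Sends the cell `(j + [0,1)^d) / k` of the unit cube onto the unit cube. -/
def cellMap (k : ℕ) (j : Fin d → Fin k) (x : Rd d) : Rd d :=
  (k : ℝ) • x - fun i => ((j i : ℕ) : ℝ)

theorem continuous_cellMap (j : Fin d → Fin k) : Continuous (cellMap k j) :=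
  (continuous_const_smul _).sub continuous_const

theorem mem_cellMap_preimage_unitCube {j : Fin d → Fin k} {x : Rd d} :
    x ∈ cellMap k j ⁻¹' unitCube d ↔ ∀ i, 0 ≤ (k : ℝ) * x i ∧ ⌊(k : ℝ) * x i⌋₊ = j i := by
  simp only [mem_preimage, unitCube, mem_univ_pi, mem_Ico, cellMap, Pi.sub_apply,
    Pi.smul_apply, smul_eq_mul, sub_nonneg, sub_lt_iff_lt_add']
  refine forall_congr' fun i => ⟨fun hi => ?_, fun ⟨hi, hfl⟩ => ?_⟩
  · have h0 : 0 ≤ (k : ℝ) * x i := (Nat.cast_nonneg _).trans hi.1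
    exact ⟨h0, (Nat.floor_eq_iff h0).2 hi⟩
  · exact (Nat.floor_eq_iff hi).1 hfl

theorem unitCube_eq_iUnion_cellMap_preimage (hk : 0 < k) :
    unitCube d = ⋃ j : Fin d → Fin k, cellMap k j ⁻¹' unitCube d := by
  have hk' : (0 : ℝ) < k := Nat.cast_pos.2 hk
  ext x
  simp only [mem_iUnion, mem_cellMap_preimage_unitCube]
  refine ⟨fun hx => ?_, fun ⟨j, hj⟩ i _ => ?_⟩
  · have hxi (i : Fin d) : 0 ≤ x i ∧ x i < 1 := hx i trivial
    refine ⟨fun i => ⟨⌊(k : ℝ) * x i⌋₊, (Nat.floor_lt (by nlinarith [hxi i])).2 ?_⟩,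
      fun i => ⟨by nlinarith [hxi i], rfl⟩⟩
    nlinarith [hxi i]
  · obtain ⟨h0, hfl⟩ := hj i
    have hlt := Nat.lt_floor_add_one ((k : ℝ) * x i)
    have hjk : (⌊(k : ℝ) * x i⌋₊ : ℝ) + 1 ≤ k := by exact_mod_cast hfl ▸ (j i).isLt
    exact ⟨nonneg_of_mul_nonneg_right (by linarith) hk', by nlinarith⟩

theorem pairwise_disjoint_cellMap_preimage :
    Pairwise (Function.onFun Disjoint fun j : Fin d → Fin k => cellMap k j ⁻¹' unitCube d) := by
  intro j j' hne
  refine Set.disjoint_left.2 fun x hx hx' => hne (funext fun i => Fin.ext ?_)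
  rw [mem_cellMap_preimage_unitCube] at hx hx'
  exact (hx i).2.symm.trans (hx' i).2

theorem map_cellMap_volume (hk : 0 < k) (j : Fin d → Fin k) :
    Measure.map (cellMap k j) volume = ((k : ℝ≥0∞) ^ d)⁻¹ • (volume : Measure (Rd d)) := by
  have hk' : (k : ℝ) ≠ 0 := Nat.cast_ne_zero.2 hk.ne'
  have hcomp : cellMap k j = (· - fun i => ((j i : ℕ) : ℝ)) ∘ ((k : ℝ) • ·) := rfl
  rw [hcomp, ← Measure.map_map (measurable_sub_const _) (measurable_const_smul _),
    Measure.map_addHaar_smul volume hk', Measure.map_smul, map_sub_right_eq_self,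
    Module.finrank_fin_fun, abs_of_pos (by positivity), ENNReal.ofReal_inv_of_pos (by positivity),
    ENNReal.ofReal_pow (by positivity), ENNReal.ofReal_natCast]

theorem setLIntegral_cellMap_preimage_unitCube (hk : 0 < k) (j : Fin d → Fin k)
    {G : Rd d → ℝ≥0∞} (hG : Measurable G) :
    ∫⁻ x in cellMap k j ⁻¹' unitCube d, G (cellMap k j x)
      = ((k : ℝ≥0∞) ^ d)⁻¹ * ∫⁻ u in unitCube d, G u := by
  rw [← setLIntegral_map measurableSet_unitCube hG
    (continuous_cellMap j).measurable, map_cellMap_volume hk, Measure.restrict_smul,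
    lintegral_smul_measure, smul_eq_mul]

theorem lintegral_unitCube_eq_sum_cells (hk : 0 < k) (F : Rd d → ℝ≥0∞) :
    ∫⁻ x in unitCube d, F x = ∑ j : Fin d → Fin k, ∫⁻ x in cellMap k j ⁻¹' unitCube d, F x := by
  conv_lhs => rw [unitCube_eq_iUnion_cellMap_preimage hk]
  rw [lintegral_iUnion (fun j => measurableSet_unitCube.preimage
    (continuous_cellMap j).measurable) pairwise_disjoint_cellMap_preimage, tsum_fintype]

end Cells

section Copies

variable {d k : ℕ} {nrm : Rd d → ℝ} {φ : ℝ → ℝ} {C : Finset (Rd d)}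

theorem exists_codebookError_le_of_tiling (h : IsNorm nrm) (hφ : MonotoneOn φ (Ici 0))
    (hC : C.Nonempty) (hk : 0 < k) {s : ℝ} (hs : 0 ≤ s) :
    ∃ C' : Finset (Rd d), C'.Nonempty ∧ C'.card ≤ k ^ d * C.card ∧
      codebookError nrm φ C' s ≤ codebookError nrm φ C (s / k) := by
  classical
  have hk' : (0 : ℝ) < k := Nat.cast_pos.2 hk
  let copy : (Fin d → Fin k) × Rd d → Rd d := fun p => (k : ℝ)⁻¹ • (p.2 + fun i => (p.1 i : ℝ))
  have hcopy (j : Fin d → Fin k) (x y : Rd d) :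
      x - copy (j, y) = (k : ℝ)⁻¹ • (cellMap k j x - y) := by
    simp only [copy, cellMap, smul_sub, smul_add, smul_smul, inv_mul_cancel₀ hk'.ne', one_smul]
    abel
  set C' := (Finset.univ ×ˢ C).image copy
  have : Nonempty (Fin k) := ⟨⟨0, hk⟩⟩
  have hC' : C'.Nonempty := (Finset.univ_nonempty.product hC).image copy
  have hdist (j : Fin d → Fin k) (x : Rd d) :
      dSet nrm x ↑C' ≤ dSet nrm (cellMap k j x) ↑C / k := by
    obtain ⟨y, hy, hyx⟩ := exists_mem_dSet_eq (nrm := nrm) hC (cellMap k j x)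
    have hmem : copy (j, y) ∈ C' := Finset.mem_image_of_mem copy
      (Finset.mem_product.2 ⟨Finset.mem_univ j, hy⟩)
    calc dSet nrm x ↑C' ≤ nrm (x - copy (j, y)) := dSet_le hC' hmem x
      _ = dSet nrm (cellMap k j x) ↑C / k := by
        rw [hcopy, h.2.2.1, abs_of_pos (inv_pos.2 hk'), hyx, inv_mul_eq_div]
  refine ⟨C', hC', ?_, ?_⟩
  · calc C'.card ≤ (Finset.univ ×ˢ C).card := Finset.card_image_le
      _ = k ^ d * C.card := by simp [Finset.card_product]
  have hpointwise (j : Fin d → Fin k) (x : Rd d) :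
      ENNReal.ofReal (φ (s * dSet nrm x ↑C')) ≤
        ENNReal.ofReal (φ (s / k * dSet nrm (cellMap k j x) ↑C)) := by
    refine ENNReal.ofReal_le_ofReal (hφ (mul_nonneg hs (dSet_nonneg h hC' x))
      (mul_nonneg (by positivity) (dSet_nonneg h hC _)) ?_)
    rw [div_mul_comm, mul_comm]
    exact mul_le_mul_of_nonneg_right (hdist j x) hs
  calc codebookError nrm φ C' s
      = ∑ j : Fin d → Fin k, ∫⁻ x in cellMap k j ⁻¹' unitCube d,
          ENNReal.ofReal (φ (s * dSet nrm x ↑C')) := lintegral_unitCube_eq_sum_cells hk _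
    _ ≤ ∑ j : Fin d → Fin k, ∫⁻ x in cellMap k j ⁻¹' unitCube d,
          ENNReal.ofReal (φ (s / k * dSet nrm (cellMap k j x) ↑C)) :=
        Finset.sum_le_sum fun j _ => setLIntegral_mono'
          (measurableSet_unitCube.preimage (continuous_cellMap j).measurable)
          fun x _ => hpointwise j x
    _ = ∑ _j : Fin d → Fin k, ((k : ℝ≥0∞) ^ d)⁻¹ * codebookError nrm φ C (s / k) :=
        Finset.sum_congr rfl fun j _ => setLIntegral_cellMap_preimage_unitCube hk j
          (measurable_ofReal_comp_mul_dSet h hφ hC (by positivity))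
    _ = codebookError nrm φ C (s / k) := by
        rw [Finset.sum_const, Finset.card_univ, Fintype.card_fun, Fintype.card_fin,
          Fintype.card_fin, nsmul_eq_mul, Nat.cast_pow, ← mul_assoc,
          ENNReal.mul_inv_cancel (pow_ne_zero d (Nat.cast_ne_zero.2 hk.ne'))
            (ENNReal.pow_ne_top (ENNReal.natCast_ne_top k)), one_mul]


theorem eventually_fNq_le_codebookError (hd : 0 < d) (h : IsNorm nrm) (hφ : MonotoneOn φ (Ici 0))
    (hC : C.Nonempty) {M η t : ℝ} (hCM : (C.card : ℝ) ≤ M) (hη : 0 < η)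
    (ht : (M / η) ^ (1 / (d : ℝ)) < t) :
    ∀ᶠ N : ℕ in atTop, fNq nrm φ N η ≤ codebookError nrm φ C t := by
  have hM : 0 < M := (Nat.cast_pos.2 hC.card_pos).trans_le hCM
  set r : ℕ → ℝ := fun N => ((N : ℝ) / M) ^ (1 / (d : ℝ))
  have hr : Tendsto r atTop atTop := (tendsto_rpow_atTop (by positivity)).comp
    (tendsto_natCast_atTop_atTop.atTop_div_const hM)
  have hratio : Tendsto (fun N => r N / ⌊r N⌋₊) atTop (𝓝 1) := by
    simpa using (tendsto_nat_floor_div_atTop.comp hr).inv₀ one_ne_zero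
  have hscale (N : ℕ) : ((N : ℝ) / η) ^ (1 / (d : ℝ)) = (M / η) ^ (1 / (d : ℝ)) * r N := by
    rw [← Real.mul_rpow (by positivity) (by positivity)]
    field_simp
  filter_upwards [hr.eventually_ge_atTop 1,
    (hratio.const_mul ((M / η) ^ (1 / (d : ℝ)))).eventually
      (gt_mem_nhds (show (M / η) ^ (1 / (d : ℝ)) * 1 < t by rwa [mul_one]))]
    with N hN1 hNt
  have hk : 0 < ⌊r N⌋₊ := Nat.floor_pos.2 hN1
  obtain ⟨C', hC', hcard, hE⟩ := exists_codebookError_le_of_tiling h hφ hC hk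
    (s := ((N : ℝ) / η) ^ (1 / (d : ℝ))) (by positivity)
  have hcardN : (C'.card : ℝ) ≤ N := by
    have hrd : r N ^ d = N / M := by
      simp only [r]
      rw [one_div, Real.rpow_inv_natCast_pow (by positivity) hd.ne']
    calc (C'.card : ℝ) ≤ (⌊r N⌋₊ : ℝ) ^ d * C.card := by exact_mod_cast hcard
      _ ≤ r N ^ d * M := by gcongr; exact Nat.floor_le (by positivity)
      _ = N := by rw [hrd]; field_simp
  calc fNq nrm φ N η ≤ codebookError nrm φ C' (((N : ℝ) / η) ^ (1 / (d : ℝ))) :=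
        iInf₂_le_of_le C' hC' (iInf_le _ hcardN)
    _ ≤ codebookError nrm φ C (((N : ℝ) / η) ^ (1 / (d : ℝ)) / ⌊r N⌋₊) := hE
    _ ≤ codebookError nrm φ C t := codebookError_mono h hφ hC (by positivity) <| by
        rw [hscale, mul_div_assoc]
        exact hNt.le

end Copies

/-- For every `η > 0`, `f_N(η) → g(η)` as `N → ∞` (along the naturals); equivalently,
optimal `N`-point reconstructions of the uniform distribution achieve `g(η)` in the limit. -/
theorem statement6 {d : ℕ} (hd : 0 < d)
    (nrm : Rd d → ℝ) (hnrm : IsNorm nrm) (φ : ℝ → ℝ) (hφ : PhiOK φ)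
    (η : ℝ) (hη : 0 < η) :
    Tendsto (fun N : ℕ => fNq nrm φ (N : ℝ) η) atTop (nhds (gq nrm φ η)) := by
  rw [gq, if_pos hη]
  refine tendsto_order.2 ⟨fun a ha => ?_, fun a ha => ?_⟩
  · filter_upwards [eventually_ge_atTop 1] with N hN
    exact ha.trans_le (iInf₂_le (N : ℝ) (mem_Ici.2 (Nat.one_le_cast.2 hN)))
  · obtain ⟨M, -, hMa⟩ : ∃ M ∈ Ici (1 : ℝ), fNq nrm φ M η < a := by simpa [iInf_lt_iff] using ha
    obtain ⟨C, hCM, hC, hCa⟩ : ∃ C : Finset (Rd d), (C.card : ℝ) ≤ M ∧ C.Nonempty ∧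
        codebookError nrm φ C ((M / η) ^ (1 / (d : ℝ))) < a := by
      simpa [fNq_eq_iInf_codebookError, iInf_lt_iff] using hMa
    have hscale : 0 < (M / η) ^ (1 / (d : ℝ)) :=
      Real.rpow_pos_of_pos (div_pos ((Nat.cast_pos.2 hC.card_pos).trans_le hCM) hη) _
    obtain ⟨t, htC, ht⟩ := ((tendsto_codebookError_nhdsGT hd hnrm hφ.1 hC hscale).eventually
      (gt_mem_nhds hCa) |>.and self_mem_nhdsWithin).exists
    exact (eventually_fNq_le_codebookError hd hnrm hφ.1 hC hCM hη ht).mono fun N hN =>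
      hN.trans_lt htC

end
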